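/- arXiv:1902.06144 — 2 statements merged into one kernel-verified Lean document; each statement's English description precedes it below -/
import Mathlib

section
/- For the generalized Gaussian family with β even, the Fisher information matrix entry g₁₁ = −E[∂²ₘₘ log f] equals (Γ(1−1/β)·β(β−1)/Γ(1/β)) · (1/σ²). -/
open MeasureTheory

/-- The generalized Gaussian density. -/
noncomputable def genGaussPdf (β : ℕ) (μ σ x : ℝ) : ℝ :=
  (β : ℝ) / (2 * σ * Real.Gamma (1 / (β : ℝ))) * Real.exp (-(x - μ) ^ β / σ ^ β)

/-- The log-likelihood `l = log f`. -/
noncomputable def genGaussLogLik (β : ℕ) (μ σ x : ℝ) : ℝ :=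
  Real.log (genGaussPdf β μ σ x)

/-!
Since `log f = log C - (x - μ)^β / σ^β`, the integrand `-∂²l · f` is
`C β (β - 1) σ^(-β) (x - μ)^(β - 2) exp (-(x - μ)^β / σ^β)`. After translating by `μ`,
the integrand is even (as `β` is even), so the integral is twice the one over `(0, ∞)`, which the
substitution `u = (t / σ)^β` turns into `(σ^(β - 1) / β) Γ((β - 1) / β)`.
-/

open Real Set

lemma genGaussLogLik_eq {β : ℕ} (hβ : 0 < β) {σ : ℝ} (hσ : σ ≠ 0) (μ x : ℝ) :
    genGaussLogLik β μ σ x = log (β / (2 * σ * Gamma (1 / β))) - (x - μ) ^ β / σ ^ β := by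
  have hΓ : Gamma (1 / β) ≠ 0 := (Gamma_pos_of_pos (by positivity)).ne'
  have hC : (β : ℝ) / (2 * σ * Gamma (1 / β)) ≠ 0 :=
    div_ne_zero (Nat.cast_ne_zero.2 hβ.ne') (mul_ne_zero (mul_ne_zero two_ne_zero hσ) hΓ)
  rw [genGaussLogLik, genGaussPdf, log_mul hC (exp_ne_zero _), log_exp]
  ring

lemma hasDerivAt_sub_pow (x m : ℝ) (n : ℕ) :
    HasDerivAt (fun m => (x - m) ^ n) (-(n * (x - m) ^ (n - 1))) m :=
  ((hasDerivAt_pow n (x - m)).comp m ((hasDerivAt_id m).const_sub x)).congr_deriv (by ring)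

lemma hasDerivAt_genGaussLogLik {β : ℕ} (hβ : 0 < β) {σ : ℝ} (hσ : σ ≠ 0) (x m : ℝ) :
    HasDerivAt (fun m => genGaussLogLik β m σ x) (β * (x - m) ^ (β - 1) / σ ^ β) m := by
  simp_rw [genGaussLogLik_eq hβ hσ]
  exact (((hasDerivAt_sub_pow x m β).div_const (σ ^ β)).const_sub _).congr_deriv (by ring)

lemma deriv_deriv_genGaussLogLik {β : ℕ} (hβ : 0 < β) {σ : ℝ} (hσ : σ ≠ 0)
    (x μ : ℝ) :
    deriv (fun m => deriv (fun m' => genGaussLogLik β m' σ x) m) μ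
      = -(β * (β - 1) * (x - μ) ^ (β - 2) / σ ^ β) := by
  simp_rw [fun m => (hasDerivAt_genGaussLogLik hβ hσ x m).deriv]
  rw [(((hasDerivAt_sub_pow x μ (β - 1)).const_mul (β : ℝ)).div_const (σ ^ β)).deriv,
    Nat.cast_sub hβ, Nat.sub_sub]
  ring

lemma inv_pow_rpow_neg_div {σ : ℝ} (hσ : 0 < σ) {p : ℕ} (hp : 0 < p) (q : ℝ) :
    (σ ^ p)⁻¹ ^ (-q / p) = σ ^ q := by
  rw [← rpow_natCast, ← rpow_neg hσ.le, ← rpow_mul hσ.le]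
  congr 1
  field_simp

lemma integral_pow_mul_exp_neg_pow_div_pow {k p : ℕ} (hk : Even k) (hp : Even p) (hp0 : 0 < p)
    {σ : ℝ} (hσ : 0 < σ) :
    ∫ t, t ^ k * exp (-t ^ p / σ ^ p) = 2 * σ ^ ((k + 1 : ℝ)) / p * Gamma ((k + 1) / p) := by
  have hq : ∫ t in Ioi (0 : ℝ), t ^ k * exp (-t ^ p / σ ^ p)
      = ∫ t in Ioi (0 : ℝ), t ^ (k : ℝ) * exp (-(σ ^ p)⁻¹ * t ^ (p : ℝ)) := by
    refine setIntegral_congr_fun measurableSet_Ioi fun t _ => ?_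
    rw [rpow_natCast, rpow_natCast, neg_div, div_eq_inv_mul, neg_mul]
  calc ∫ t, t ^ k * exp (-t ^ p / σ ^ p)
      = ∫ t, |t| ^ k * exp (-|t| ^ p / σ ^ p) := by simp only [hk.pow_abs, hp.pow_abs]
    _ = 2 * ∫ t in Ioi (0 : ℝ), t ^ k * exp (-t ^ p / σ ^ p) :=
        integral_comp_abs (f := fun t => t ^ k * exp (-t ^ p / σ ^ p))
    _ = 2 * σ ^ ((k + 1 : ℝ)) / p * Gamma ((k + 1) / p) := by
        rw [hq, integral_rpow_mul_exp_neg_mul_rpow (by positivity)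
          (by linarith [k.cast_nonneg (α := ℝ)]) (by positivity), inv_pow_rpow_neg_div hσ hp0]
        ring

theorem generalized_gaussian_fisher_g11
    (β : ℕ) (hβeven : Even β) (hβpos : 0 < β) (μ σ : ℝ) (hσ : 0 < σ) :
    -∫ x : ℝ, (deriv (fun m => deriv (fun m' => genGaussLogLik β m' σ x) m) μ)
        * genGaussPdf β μ σ x
      = Real.Gamma (1 - 1 / (β : ℝ)) * (β : ℝ) * ((β : ℝ) - 1)
        / Real.Gamma (1 / (β : ℝ)) * (1 / σ ^ 2) := by
  have hβ2 : 2 ≤ β := by obtain ⟨k, rfl⟩ := hβeven; omega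
  have hk : ((β - 2 : ℕ) : ℝ) + 1 = β - 1 := by push_cast [Nat.cast_sub hβ2]; ring
  calc -∫ x, deriv (fun m => deriv (fun m' => genGaussLogLik β m' σ x) m) μ
          * genGaussPdf β μ σ x
      = ∫ x, β / (2 * σ * Gamma (1 / β)) * β * (β - 1) / σ ^ β
          * ((x - μ) ^ (β - 2) * exp (-(x - μ) ^ β / σ ^ β)) := by
        rw [← integral_neg]
        congr 1 with x
        rw [deriv_deriv_genGaussLogLik hβpos hσ.ne', genGaussPdf]
        ring
    _ = β / (2 * σ * Gamma (1 / β)) * β * (β - 1) / σ ^ β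
          * (2 * σ ^ (β - 1 : ℝ) / β * Gamma ((β - 1) / β)) := by
        rw [integral_const_mul,
          integral_sub_right_eq_self (fun t => t ^ (β - 2) * exp (-t ^ β / σ ^ β)),
          integral_pow_mul_exp_neg_pow_div_pow (hβeven.tsub even_two) hβeven hβpos hσ, hk]
    _ = _ := by
        rw [show (β - 1 : ℝ) / β = 1 - 1 / β by field_simp, rpow_sub hσ, rpow_natCast,
          rpow_one]
        field_simp
end

section
/- The α-Gaussian curvature K^{(α)} = −(1−α)(2−β+(1−α)(β−1))/β of the generalized Gaussian manifold vanishes if and only if α = 1 or α = 1/(β−1). -/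
theorem alpha_gaussian_curvature_vanishes_iff
    (β : ℕ) (hβeven : Even β) (hβ : 1 < β) (α : ℝ) :
    -((1 - α) * (2 - (β : ℝ) + (1 - α) * ((β : ℝ) - 1))) / (β : ℝ) = 0
      ↔ α = 1 ∨ α = 1 / ((β : ℝ) - 1) := by
  have hb : (1 : ℝ) < (β : ℝ) := by exact_mod_cast hβ
  have hb0 : (β : ℝ) ≠ 0 := by linarith
  have hb1 : (β : ℝ) - 1 ≠ 0 := by linarith
  rw [div_eq_zero_iff]
  constructor
  · rintro (h | h)
    · have h' : (1 - α) * (2 - (β : ℝ) + (1 - α) * ((β : ℝ) - 1)) = 0 := by linarith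
      rcases mul_eq_zero.1 h' with h1 | h1
      · left; linarith
      · right
        field_simp
        nlinarith [h1]
    · exact absurd h hb0
  · rintro (h | h)
    · left; subst h; ring
    · left
      subst h
      field_simp
      ring
end
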